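/- For every k ≥ 1, the map (x₁,…,x_k) ↦ (x₁, (x₂·x₁⁻¹, …, x_k·x₁⁻¹)) is a homeomorphism from F̃_k(L_{7,1}) onto S³ × Y_{k−1}, where Y_{k−1} is the orbit configuration space of k−1 points in the ℤ/7-space S³ ∖ μ₇, i.e., the subspace of (S³ ∖ μ₇)^{k−1} of tuples (y₂,…,y_k) with y_i ≠ ζᵐ·y_j for all i ≠ j and all m ∈ {0,…,6}. -/

import Mathlib

open Quaternion

/-- The group of unit quaternions (`S³`). -/
abbrev UQ := Metric.sphere (0 : Quaternion ℝ) 1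

/-- The 7th root of unity `exp(2πik/7) ∈ ℂ ⊆ ℍ`, as a quaternion. -/
noncomputable def zqQ (k : Fin 7) : Quaternion ℝ :=
  ⟨Real.cos (2 * Real.pi * k / 7), Real.sin (2 * Real.pi * k / 7), 0, 0⟩

lemma norm_zqQ (k : Fin 7) : ‖zqQ k‖ = 1 := by
  have h : ‖zqQ k‖ ^ 2 = 1 := by
    rw [sq, ← Quaternion.normSq_eq_norm_mul_self, Quaternion.normSq_def']
    simp [zqQ, Real.cos_sq_add_sin_sq]
  have h0 : (0:ℝ) ≤ ‖zqQ k‖ := norm_nonneg _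
  nlinarith [h, h0]

/-- The 7th root of unity `exp(2πik/7)` as a unit quaternion; `ℤ/7` acts on `S³` by
left multiplication by these elements (the covering action of `L_{7,1}`). -/
noncomputable def zq (k : Fin 7) : UQ :=
  ⟨zqQ k, by rw [mem_sphere_zero_iff_norm]; exact norm_zqQ k⟩

/-- The complement `S³ ∖ μ₇` of the 7th roots of unity in the unit quaternions. -/
abbrev SminusMu := {q : UQ // ∀ k : Fin 7, q ≠ zq k}

/-- The orbit configuration space `F̃_k(L_{7,1})`: `k`-tuples of unit quaternions lying
in pairwise distinct `ℤ/7`-orbits. -/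
abbrev OrbQ (k : ℕ) :=
  {f : Fin k → UQ // ∀ i j, i ≠ j → ∀ m : Fin 7, f i ≠ zq m * f j}

/-- The orbit configuration space `Y_k` of `k` points in the `ℤ/7`-space `S³ ∖ μ₇`:
tuples `(y_1,…,y_k)` in `S³ ∖ μ₇` with `y_i ≠ ζᵐ·y_j` for all `i ≠ j` and all `m`. -/
abbrev Y (k : ℕ) :=
  {f : Fin k → SminusMu // ∀ i j, i ≠ j → ∀ m : Fin 7, (f i : UQ) ≠ zq m * (f j : UQ)}

/-- The map `(x₁,…,x_k) ↦ (x₁, (x₂·x₁⁻¹, …, x_k·x₁⁻¹))`. -/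
noncomputable def psi (m : ℕ) : OrbQ (m + 1) → UQ × Y m := fun x =>
  (x.1 0,
    ⟨fun j => ⟨x.1 j.succ * (x.1 0)⁻¹,
        fun k h => x.2 j.succ 0 (Fin.succ_ne_zero j) k (mul_inv_eq_iff_eq_mul.mp h)⟩,
      by
        intro i j hij k h
        apply x.2 i.succ j.succ (fun e => hij (Fin.succ_injective _ e)) k
        have h' : x.1 i.succ * (x.1 0)⁻¹ = (zq k * x.1 j.succ) * (x.1 0)⁻¹ := by
          rw [mul_assoc]; exact h
        exact mul_right_cancel h'⟩)

/-!
Right multiplication by `x₁⁻¹` commutes with the left action of `μ₇`, so it carries the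
orbit-separation conditions on `(x₁, …, x_k)` to those on `(1, x₂x₁⁻¹, …, x_kx₁⁻¹)`. For a tuple
`(1, y₂, …, y_k)` the conditions between `1` and `y_j` say exactly that `y_j ∉ μ₇` (as `μ₇` is
closed under inversion), and the remaining ones are those defining `Y_{k-1}`. Hence
`(a, y) ↦ (a, y₂a, …, y_ka)` is a continuous inverse.
-/

theorem zqQ_eq_toCircle (k : Fin 7) : zqQ k = ((ZMod.toCircle (N := 7) k : ℂ) : ℍ) := by
  rw [ZMod.toCircle_eq_circleExp (N := 7) k, Circle.coe_exp, ← mul_div_assoc, Nat.cast_ofNat]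
  ext <;> simp only [zqQ, re_coeComplex, imI_coeComplex, imJ_coeComplex, imK_coeComplex,
    Complex.exp_ofReal_mul_I_re, Complex.exp_ofReal_mul_I_im] <;> rfl

theorem zq_neg (k : Fin 7) : zq (-k) = (zq k)⁻¹ := by
  have h : ZMod.toCircle (N := 7) (-k) = (ZMod.toCircle (N := 7) k)⁻¹ :=
    AddChar.map_neg_eq_inv _ _
  ext1
  change zqQ (-k) = (zqQ k)⁻¹
  rw [zqQ_eq_toCircle, zqQ_eq_toCircle, ← Quaternion.coe_ofComplex, ← map_inv₀,
    ← Circle.coe_inv]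
  exact congrArg (fun z : Circle => ofComplex (z : ℂ)) h

section OrbitSeparated

variable {G ι α : Type*} [Group G]

def OrbitSeparated (s : ι → G) (f : α → G) : Prop :=
  ∀ i j, i ≠ j → ∀ m, f i ≠ s m * f j

theorem orbitSeparated_mul_right_iff {s : ι → G} {f : α → G} (a : G) :
    OrbitSeparated s (fun i => f i * a) ↔ OrbitSeparated s f := by
  simp only [OrbitSeparated, ← mul_assoc, ne_eq, mul_left_inj]

theorem OrbitSeparated.cons_one {s : ι → G} (hs : ∀ m, ∃ m', s m' = (s m)⁻¹) {n : ℕ}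
    {y : Fin n → G} (hy : ∀ j m, y j ≠ s m) (h : OrbitSeparated s y) :
    OrbitSeparated s (Fin.cons 1 y : Fin (n + 1) → G) := by
  intro i j hij m
  cases i using Fin.cases with
  | zero =>
    cases j using Fin.cases with
    | zero => exact (hij rfl).elim
    | succ j =>
      obtain ⟨m', hm'⟩ := hs m
      intro h1
      rw [Fin.cons_zero, Fin.cons_succ] at h1
      have hyj : y j = (s m)⁻¹ := eq_inv_of_mul_eq_one_right h1.symm
      exact hy j m' (hyj.trans hm'.symm)
  | succ i =>
    cases j using Fin.cases with
    | zero => simpa using hy i m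
    | succ j => simpa using h i j (fun e => hij (congrArg Fin.succ e)) m

end OrbitSeparated

noncomputable def psiInv (m : ℕ) (p : UQ × Y m) : OrbQ (m + 1) :=
  ⟨fun i => (Fin.cons 1 (fun j => (p.2.1 j : UQ)) : Fin (m + 1) → UQ) i * p.1,
    (orbitSeparated_mul_right_iff (f := Fin.cons 1 (fun j => (p.2.1 j : UQ))) p.1).2 <|
      OrbitSeparated.cons_one (fun k => ⟨-k, zq_neg k⟩) (fun j => (p.2.1 j).2) p.2.2⟩

noncomputable def psiHomeomorph (m : ℕ) : OrbQ (m + 1) ≃ₜ UQ × Y m where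
  toFun := psi m
  invFun := psiInv m
  left_inv x := by
    ext i : 2
    cases i using Fin.cases with
    | zero => exact one_mul (x.1 0)
    | succ j => exact inv_mul_cancel_right (x.1 j.succ) (x.1 0)
  right_inv p := Prod.ext (one_mul p.1) <| Subtype.ext <| funext fun j =>
    Subtype.ext (by simp [psi, psiInv])
  continuous_toFun := by
    have hx : ∀ i, Continuous fun x : OrbQ (m + 1) => x.1 i := fun i =>
      (continuous_apply i).comp continuous_subtype_val
    exact (hx 0).prodMk <| .subtype_mk (continuous_pi fun j : Fin m =>
      .subtype_mk ((hx j.succ).mul (hx 0).inv) _) _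
  continuous_invFun := by
    have hy : Continuous fun p : UQ × Y m => fun j => (p.2.1 j : UQ) :=
      continuous_pi fun j => continuous_subtype_val.comp <|
        (continuous_apply j).comp (continuous_subtype_val.comp continuous_snd)
    have hcons : Continuous fun p : UQ × Y m =>
        (Fin.cons 1 (fun j => (p.2.1 j : UQ)) : Fin (m + 1) → UQ) :=
      continuous_const.finCons hy
    exact .subtype_mk (continuous_pi fun i =>
      ((continuous_apply i).comp hcons).mul continuous_fst) _

/-- For every `k ≥ 1` (written here as `k = m + 1`), the map
`(x₁,…,x_k) ↦ (x₁, (x₂·x₁⁻¹, …, x_k·x₁⁻¹))` is a homeomorphism from `F̃_k(L_{7,1})`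
onto `S³ × Y_{k−1}`, where `Y_{k−1}` is the orbit configuration space of `k−1` points
in the `ℤ/7`-space `S³ ∖ μ₇`. -/
theorem stmt_18 (m : ℕ) : IsHomeomorph (psi m) :=
  (psiHomeomorph m).isHomeomorph
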